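/- arXiv:1903.10217 — 3 statements merged into one kernel-verified Lean document; each statement's English description precedes it below -/
import Mathlib

section
/- Let α > 1 be real and let f : [0, π] → ℝ be continuously differentiable with f(0) = 0 and f(π) = 2π. Then π ∫₀^π (2 + f'(r)² + sin(f(r))²/sin(r)²)^α sin(r) dr ≥ 6^α · 2π. -/
/-!
Write `G = 2 + f'² + sin² f / sin² r` for the energy density. Since `t ↦ t^α` lies above its
tangent line at `6`, it suffices to show `∫₀^π G sin r dr ≥ 6 ∫₀^π sin r dr = 12`. By AM-GM,
`G sin r ≥ 2 sin r + 2 |f' sin f|`, and `∫₀^π |f' sin f| ≥ 4` because `f` passes through `π`,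
so that `cos ∘ f` runs from `1` down to `-1` and back up to `1`.

The integrals are genuine (not junk values): `f` is Lipschitz and `sin ∘ f` vanishes at both
ends, so Jordan's inequality bounds `|sin f| / sin r`, and `G` is bounded.
-/

open Real Set MeasureTheory intervalIntegral

open scoped NNReal

theorem rpow_add_mul_rpow_sub_one_mul_sub_le {α a t : ℝ} (hα : 1 ≤ α) (ha : 0 < a)
    (ht : 0 ≤ t) : a ^ α + α * a ^ (α - 1) * (t - a) ≤ t ^ α := by
  have hbern := one_add_mul_self_le_rpow_one_add
    (by linarith [div_nonneg ht ha.le] : -1 ≤ t / a - 1) hα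
  rw [add_sub_cancel, div_rpow ht ha.le] at hbern
  calc a ^ α + α * a ^ (α - 1) * (t - a) = a ^ α * (1 + α * (t / a - 1)) := by
        rw [rpow_sub_one ha.ne']; field_simp
    _ ≤ a ^ α * (t ^ α / a ^ α) := by gcongr
    _ = t ^ α := by field_simp

theorem rpow_mul_integral_le_integral_rpow_mul {α c a b : ℝ} {G w : ℝ → ℝ} (hα : 1 ≤ α)
    (hc : 0 < c) (hab : a ≤ b) (hG : ∀ x ∈ Ioo a b, 0 ≤ G x) (hw : ∀ x ∈ Ioo a b, 0 ≤ w x)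
    (hwi : IntervalIntegrable w volume a b)
    (hGwi : IntervalIntegrable (fun x ↦ G x * w x) volume a b)
    (hGαwi : IntervalIntegrable (fun x ↦ G x ^ α * w x) volume a b)
    (hmean : c * ∫ x in a..b, w x ≤ ∫ x in a..b, G x * w x) :
    c ^ α * ∫ x in a..b, w x ≤ ∫ x in a..b, G x ^ α * w x := by
  have hk : 0 ≤ α * c ^ (α - 1) := by positivity
  have htangent : ∀ x ∈ Ioo a b,
      (c ^ α - α * c ^ (α - 1) * c) * w x + α * c ^ (α - 1) * (G x * w x) ≤ G x ^ α * w x := by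
    intro x hx
    calc (c ^ α - α * c ^ (α - 1) * c) * w x + α * c ^ (α - 1) * (G x * w x)
        = (c ^ α + α * c ^ (α - 1) * (G x - c)) * w x := by ring
      _ ≤ G x ^ α * w x :=
        mul_le_mul_of_nonneg_right (rpow_add_mul_rpow_sub_one_mul_sub_le hα hc (hG x hx))
          (hw x hx)
  calc c ^ α * ∫ x in a..b, w x
      ≤ (c ^ α - α * c ^ (α - 1) * c) * (∫ x in a..b, w x)
        + α * c ^ (α - 1) * ∫ x in a..b, G x * w x := by nlinarith
    _ = ∫ x in a..b, (c ^ α - α * c ^ (α - 1) * c) * w x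
        + α * c ^ (α - 1) * (G x * w x) := by
      rw [integral_add (hwi.const_mul _) (hGwi.const_mul _), intervalIntegral.integral_const_mul,
        intervalIntegral.integral_const_mul]
    _ ≤ ∫ x in a..b, G x ^ α * w x :=
      integral_mono_on_of_le_Ioo hab ((hwi.const_mul _).add (hGwi.const_mul _)) hGαwi htangent

theorem intervalIntegrable_of_continuousOn_Ioo_of_norm_le {E : Type*} [NormedAddCommGroup E]
    {g : ℝ → E} {a b K : ℝ} (hab : a ≤ b) (hg : ContinuousOn g (Ioo a b))
    (hK : ∀ x ∈ Ioo a b, ‖g x‖ ≤ K) : IntervalIntegrable g volume a b := by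
  rw [intervalIntegrable_iff_integrableOn_Ioo_of_le hab]
  refine ⟨hg.aestronglyMeasurable measurableSet_Ioo,
    HasFiniteIntegral.restrict_of_bounded (C := K) measure_Ioo_lt_top ?_⟩
  exact (ae_restrict_iff' measurableSet_Ioo).2 (ae_of_all _ hK)

theorem abs_sub_le_integral_abs_deriv {g g' : ℝ → ℝ} {a b : ℝ} (hab : a ≤ b)
    (hg : ∀ x ∈ Icc a b, HasDerivAt g (g' x) x) (hg' : IntervalIntegrable g' volume a b) :
    |g b - g a| ≤ ∫ x in a..b, |g' x| := by
  rw [← integral_eq_sub_of_hasDerivAt (fun x hx ↦ hg x (by rwa [uIcc_of_le hab] at hx)) hg']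
  exact abs_integral_le_integral_abs hab

theorem four_le_integral_abs_deriv_mul_sin {f f' : ℝ → ℝ} {a b : ℝ} (hab : a ≤ b)
    (hf : ∀ x ∈ Icc a b, HasDerivAt f (f' x) x) (hf' : ContinuousOn f' (Icc a b))
    (ha : f a = 0) (hb : f b = 2 * π) :
    4 ≤ ∫ x in a..b, |f' x * sin (f x)| := by
  have hfc : ContinuousOn f (Icc a b) := fun x hx ↦ (hf x hx).continuousAt.continuousWithinAt
  obtain ⟨c, hc, hfc_eq⟩ := intermediate_value_Icc hab hfc
    (show π ∈ Icc (f a) (f b) by rw [ha, hb]; constructor <;> linarith [pi_pos])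
  have hcos : ∀ x ∈ Icc a b, HasDerivAt (fun x ↦ cos (f x)) (-(f' x * sin (f x))) x :=
    fun x hx ↦ (hf x hx).cos.congr_deriv (by ring)
  have hprod : ContinuousOn (fun x ↦ f' x * sin (f x)) (Icc a b) :=
    hf'.mul (continuous_sin.comp_continuousOn hfc)
  have hcont := hprod.neg
  have hleft := abs_sub_le_integral_abs_deriv hc.1
    (fun x hx ↦ hcos x ⟨hx.1, hx.2.trans hc.2⟩)
    ((hcont.mono (Icc_subset_Icc le_rfl hc.2)).intervalIntegrable_of_Icc hc.1)
  have hright := abs_sub_le_integral_abs_deriv hc.2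
    (fun x hx ↦ hcos x ⟨hc.1.trans hx.1, hx.2⟩)
    ((hcont.mono (Icc_subset_Icc hc.1 le_rfl)).intervalIntegrable_of_Icc hc.2)
  simp only [abs_neg, hfc_eq, ha, hb, cos_pi, cos_zero, cos_two_pi] at hleft hright
  rw [← integral_add_adjacent_intervals
    ((hprod.abs.mono (Icc_subset_Icc le_rfl hc.2)).intervalIntegrable_of_Icc hc.1)
    ((hprod.abs.mono (Icc_subset_Icc hc.1 le_rfl)).intervalIntegrable_of_Icc hc.2)]
  rw [show |(-1 : ℝ) - 1| = 2 by norm_num] at hleft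
  rw [show |(1 : ℝ) - -1| = 2 by norm_num] at hright
  linarith

theorem two_div_pi_mul_min_le_sin {r : ℝ} (hr : r ∈ Icc 0 π) : 2 / π * min r (π - r) ≤ sin r := by
  rcases le_total r (π / 2) with h | h
  · exact (mul_le_mul_of_nonneg_left (min_le_left _ _) (by positivity)).trans
      (mul_le_sin hr.1 h)
  · rw [← sin_pi_sub]
    exact (mul_le_mul_of_nonneg_left (min_le_right _ _) (by positivity)).trans
      (mul_le_sin (by linarith [hr.2]) (by linarith))

theorem abs_sin_comp_le_mul_sin {f : ℝ → ℝ} {K : ℝ≥0} (hf : LipschitzOnWith K f (Icc 0 π))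
    (h0 : sin (f 0) = 0) (hπ : sin (f π) = 0) {r : ℝ} (hr : r ∈ Icc 0 π) :
    |sin (f r)| ≤ K * π / 2 * sin r := by
  have hzero : ∀ x ∈ Icc 0 π, sin (f x) = 0 → |sin (f r)| ≤ K * |r - x| := fun x hx hfx ↦
    calc |sin (f r)| = |sin (f r) - sin (f x)| := by rw [hfx, sub_zero]
      _ ≤ |f r - f x| := abs_sin_sub_sin_le _ _
      _ ≤ K * |r - x| := by simpa only [dist_eq] using hf.dist_le_mul r hr x hx
  have hleft := hzero 0 ⟨le_rfl, pi_pos.le⟩ h0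
  have hright := hzero π ⟨pi_pos.le, le_rfl⟩ hπ
  rw [sub_zero, abs_of_nonneg hr.1] at hleft
  rw [abs_sub_comm, abs_of_nonneg (sub_nonneg.2 hr.2)] at hright
  calc |sin (f r)| ≤ K * min r (π - r) := by
        rw [mul_min_of_nonneg _ _ K.coe_nonneg]; exact le_min hleft hright
    _ = K * π / 2 * (2 / π * min r (π - r)) := by field_simp
    _ ≤ K * π / 2 * sin r := by gcongr; exact two_div_pi_mul_min_le_sin hr

theorem two_mul_abs_mul_le_sq_mul_add_sq_div {s : ℝ} (hs : 0 < s) (x y : ℝ) :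
    2 * |x * y| ≤ x ^ 2 * s + y ^ 2 / s := by
  have hsq : x ^ 2 * s + y ^ 2 / s - 2 * |x * y| = (|x| * s - |y|) ^ 2 / s := by
    field_simp
    rw [abs_mul, ← sq_abs x, ← sq_abs y]
    ring
  linarith [div_nonneg (sq_nonneg (|x| * s - |y|)) hs.le]

noncomputable def energyDensity (f f' : ℝ → ℝ) (r : ℝ) : ℝ :=
  2 + f' r ^ 2 + sin (f r) ^ 2 / sin r ^ 2

section energyDensity

variable {f f' : ℝ → ℝ}

theorem two_le_energyDensity (r : ℝ) : 2 ≤ energyDensity f f' r := by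
  unfold energyDensity
  have := sq_nonneg (f' r)
  have : 0 ≤ sin (f r) ^ 2 / sin r ^ 2 := by positivity
  linarith

theorem continuousOn_energyDensity (hf : ContinuousOn f (Ioo 0 π))
    (hf' : ContinuousOn f' (Ioo 0 π)) : ContinuousOn (energyDensity f f') (Ioo 0 π) :=
  (continuousOn_const.add (hf'.pow 2)).add
    (((continuous_sin.comp_continuousOn hf).pow 2).div (continuous_sin.continuousOn.pow 2)
      fun _ hr ↦ pow_ne_zero _ (sin_pos_of_pos_of_lt_pi hr.1 hr.2).ne')

theorem energyDensity_le {K : ℝ≥0} {M : ℝ} (hf : LipschitzOnWith K f (Icc 0 π))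
    (h0 : sin (f 0) = 0) (hπ : sin (f π) = 0) (hf' : ∀ r ∈ Ioo 0 π, |f' r| ≤ M) {r : ℝ}
    (hr : r ∈ Ioo 0 π) : energyDensity f f' r ≤ 2 + M ^ 2 + (K * π / 2) ^ 2 := by
  have hs := sin_pos_of_pos_of_lt_pi hr.1 hr.2
  have hf'sq : f' r ^ 2 ≤ M ^ 2 := by
    rw [← sq_abs]; exact pow_le_pow_left₀ (abs_nonneg _) (hf' r hr) 2
  have hratio : sin (f r) ^ 2 / sin r ^ 2 ≤ (K * π / 2) ^ 2 := by
    rw [div_le_iff₀ (by positivity), ← mul_pow, ← sq_abs (sin (f r))]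
    exact pow_le_pow_left₀ (abs_nonneg _)
      (abs_sin_comp_le_mul_sin hf h0 hπ (Ioo_subset_Icc_self hr)) 2
  unfold energyDensity
  linarith

theorem bddAbove_energyDensity (hf : ∀ r ∈ Icc 0 π, HasDerivAt f (f' r) r)
    (hf' : ContinuousOn f' (Icc 0 π)) (h0 : sin (f 0) = 0) (hπ : sin (f π) = 0) :
    BddAbove (energyDensity f f' '' Ioo 0 π) := by
  obtain ⟨M, hM⟩ := isCompact_Icc.exists_bound_of_continuousOn hf'
  have hlip : LipschitzOnWith M.toNNReal f (Icc 0 π) :=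
    Convex.lipschitzOnWith_of_nnnorm_hasDerivWithin_le (convex_Icc 0 π)
      (fun r hr ↦ (hf r hr).hasDerivWithinAt) fun r hr ↦ by
        rw [← NNReal.coe_le_coe, coe_nnnorm]; exact (hM r hr).trans M.le_coe_toNNReal
  refine ⟨_, forall_mem_image.2 fun r hr ↦ energyDensity_le hlip h0 hπ (M := M) ?_ hr⟩
  exact fun r hr ↦ (norm_eq_abs _).symm.trans_le (hM r (Ioo_subset_Icc_self hr))

theorem intervalIntegrable_energyDensity_rpow_mul_sin {p : ℝ} (hp : 0 ≤ p)
    (hf : ∀ r ∈ Icc 0 π, HasDerivAt f (f' r) r) (hf' : ContinuousOn f' (Icc 0 π))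
    (h0 : sin (f 0) = 0) (hπ : sin (f π) = 0) :
    IntervalIntegrable (fun r ↦ energyDensity f f' r ^ p * sin r) volume 0 π := by
  have hc := continuousOn_energyDensity
    (fun r hr ↦ (hf r (Ioo_subset_Icc_self hr)).continuousAt.continuousWithinAt)
    (hf'.mono Ioo_subset_Icc_self)
  obtain ⟨B, hB⟩ := bddAbove_energyDensity hf hf' h0 hπ
  refine intervalIntegrable_of_continuousOn_Ioo_of_norm_le pi_pos.le
    ((hc.rpow_const fun r _ ↦ Or.inr hp).mul continuous_sin.continuousOn) (K := B ^ p)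
    fun r hr ↦ ?_
  have hG := two_le_energyDensity (f := f) (f' := f') r
  have hGB : energyDensity f f' r ≤ B := hB (mem_image_of_mem _ hr)
  have hs := sin_nonneg_of_nonneg_of_le_pi hr.1.le hr.2.le
  rw [norm_eq_abs, abs_of_nonneg (by positivity)]
  calc energyDensity f f' r ^ p * sin r ≤ B ^ p * 1 :=
        mul_le_mul (rpow_le_rpow (by linarith) hGB hp) (sin_le_one r) hs
          (rpow_nonneg (by linarith) p)
    _ = B ^ p := mul_one _

theorem two_mul_sin_add_two_mul_abs_le_energyDensity_mul_sin {r : ℝ} (hr : r ∈ Ioo 0 π) :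
    2 * sin r + 2 * |f' r * sin (f r)| ≤ energyDensity f f' r * sin r := by
  have hs := sin_pos_of_pos_of_lt_pi hr.1 hr.2
  have hexp : energyDensity f f' r * sin r
      = 2 * sin r + (f' r ^ 2 * sin r + sin (f r) ^ 2 / sin r) := by
    unfold energyDensity; field_simp; ring
  linarith [two_mul_abs_mul_le_sq_mul_add_sq_div hs (f' r) (sin (f r))]

theorem twelve_le_integral_energyDensity_mul_sin (hf : ∀ r ∈ Icc 0 π, HasDerivAt f (f' r) r)
    (hf' : ContinuousOn f' (Icc 0 π)) (h0 : f 0 = 0) (hπ : f π = 2 * π)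
    (hGsin : IntervalIntegrable (fun r ↦ energyDensity f f' r * sin r) volume 0 π) :
    12 ≤ ∫ r in (0 : ℝ)..π, energyDensity f f' r * sin r := by
  have hsin : IntervalIntegrable sin volume 0 π := continuous_sin.intervalIntegrable 0 π
  have habs : IntervalIntegrable (fun r ↦ |f' r * sin (f r)|) volume 0 π :=
    ((hf'.mul (continuous_sin.comp_continuousOn fun r hr ↦
      (hf r hr).continuousAt.continuousWithinAt)).abs).intervalIntegrable_of_Icc pi_pos.le
  calc (12 : ℝ)
      ≤ 2 * (∫ r in (0 : ℝ)..π, sin r) + 2 * ∫ r in (0 : ℝ)..π, |f' r * sin (f r)| := by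
        rw [integral_sin, cos_zero, cos_pi]
        linarith [four_le_integral_abs_deriv_mul_sin pi_pos.le hf hf' h0 hπ]
    _ = ∫ r in (0 : ℝ)..π, 2 * sin r + 2 * |f' r * sin (f r)| := by
        rw [integral_add (hsin.const_mul 2) (habs.const_mul 2),
          intervalIntegral.integral_const_mul, intervalIntegral.integral_const_mul]
    _ ≤ ∫ r in (0 : ℝ)..π, energyDensity f f' r * sin r :=
        integral_mono_on_of_le_Ioo pi_pos.le ((hsin.const_mul 2).add (habs.const_mul 2))
          hGsin fun r hr ↦ two_mul_sin_add_two_mul_abs_le_energyDensity_mul_sin hr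

end energyDensity

/-- Energy lower bound `I_α(f) ≥ 6^α · 2π` for C¹ profiles `f : [0,π] → ℝ` with
`f 0 = 0` and `f π = 2π` (degree-zero co-rotationally symmetric maps). -/
theorem alpha_energy_lower_bound_deg_zero (α : ℝ) (hα : 1 < α) (f f' : ℝ → ℝ)
    (hderiv : ∀ r ∈ Set.Icc (0 : ℝ) π, HasDerivAt f (f' r) r)
    (hcont : ContinuousOn f' (Set.Icc (0 : ℝ) π))
    (h0 : f 0 = 0) (hπ : f π = 2 * π) :
    (6 : ℝ) ^ α * (2 * π) ≤
      π * ∫ r in (0 : ℝ)..π,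
        (2 + f' r ^ 2 + sin (f r) ^ 2 / sin r ^ 2) ^ α * sin r := by
  have hsin0 : sin (f 0) = 0 := by rw [h0, sin_zero]
  have hsinπ : sin (f π) = 0 := by rw [hπ, sin_two_pi]
  have hGsin : IntervalIntegrable (fun r ↦ energyDensity f f' r * sin r) volume 0 π := by
    simpa only [rpow_one] using
      intervalIntegrable_energyDensity_rpow_mul_sin zero_le_one hderiv hcont hsin0 hsinπ
  have hmean : 6 * ∫ r in (0 : ℝ)..π, sin r ≤ ∫ r in (0 : ℝ)..π, energyDensity f f' r * sin r := by
    rw [integral_sin, cos_zero, cos_pi]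
    linarith [twelve_le_integral_energyDensity_mul_sin hderiv hcont h0 hπ hGsin]
  have hjensen := rpow_mul_integral_le_integral_rpow_mul hα.le (by norm_num : (0 : ℝ) < 6)
    pi_pos.le (fun r _ ↦ zero_le_two.trans (two_le_energyDensity r))
    (fun r hr ↦ sin_nonneg_of_nonneg_of_le_pi hr.1.le hr.2.le)
    (continuous_sin.intervalIntegrable 0 π) hGsin
    (intervalIntegrable_energyDensity_rpow_mul_sin (by linarith) hderiv hcont hsin0 hsinπ) hmean
  rw [integral_sin, cos_zero, cos_pi] at hjensen
  calc (6 : ℝ) ^ α * (2 * π) = π * (6 ^ α * (1 - -1)) := by ring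
    _ ≤ _ := mul_le_mul_of_nonneg_left hjensen pi_pos.le
end

section
/- Let λ > 0, let f(r) = 2 arctan(λ tan(r)) for r ∈ (0, π/2). Then for every r ∈ (0, π/2), (1/2)(f'(r)² + sin(f(r))²/sin(r)²) = 2λ²(1 + cos(r)²) / (λ² − (λ² − 1)cos(r)²)². -/
open Real

/-! Writing `D = cos² r + λ² sin² r = λ² - (λ² - 1) cos² r`, the chain rule gives
`f'(r) = 2λ / D` and the half-angle formula `sin (2 arctan t) = 2t / (1 + t²)` gives
`sin f(r) = 2λ sin r cos r / D`, so the two terms of the energy density are `4λ² / D²` and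
`4λ² cos² r / D²`. -/

theorem Real.sin_two_mul_arctan (t : ℝ) : sin (2 * arctan t) = 2 * t / (1 + t ^ 2) := by
  rw [sin_eq_two_mul_tan_half_div_one_add_tan_half_sq, mul_div_cancel_left₀ _ two_ne_zero,
    tan_arctan]

lemma Real.cos_sq_add_mul_sin_sq_pos (l : ℝ) {r : ℝ} (hr : cos r ≠ 0) :
    0 < cos r ^ 2 + l ^ 2 * sin r ^ 2 := by
  positivity

lemma Real.one_add_sq_mul_tan (l : ℝ) {r : ℝ} (hr : cos r ≠ 0) :
    1 + (l * tan r) ^ 2 = (cos r ^ 2 + l ^ 2 * sin r ^ 2) / cos r ^ 2 := by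
  rw [tan_eq_sin_div_cos]
  field_simp

lemma Real.hasDerivAt_two_mul_arctan_mul_tan (l : ℝ) {r : ℝ} (hr : cos r ≠ 0) :
    HasDerivAt (fun s => 2 * arctan (l * tan s)) (2 * l / (cos r ^ 2 + l ^ 2 * sin r ^ 2)) r := by
  have h := (((hasDerivAt_tan hr).const_mul l).arctan).const_mul 2
  refine h.congr_deriv ?_
  rw [one_add_sq_mul_tan l hr]
  have hD := cos_sq_add_mul_sin_sq_pos l hr
  field_simp

lemma Real.sin_two_mul_arctan_mul_tan (l : ℝ) {r : ℝ} (hr : cos r ≠ 0) :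
    sin (2 * arctan (l * tan r)) = 2 * l * sin r * cos r / (cos r ^ 2 + l ^ 2 * sin r ^ 2) := by
  rw [sin_two_mul_arctan, one_add_sq_mul_tan l hr, tan_eq_sin_div_cos]
  have hD := cos_sq_add_mul_sin_sq_pos l hr
  field_simp

theorem energy_density_formula_general (l : ℝ) (r : ℝ)
    (hr : r ∈ Set.Ioo (0 : ℝ) (π / 2)) :
    (1 / 2) * ((deriv (fun s => 2 * arctan (l * tan s)) r) ^ 2
        + sin (2 * arctan (l * tan r)) ^ 2 / sin r ^ 2)
      = 2 * l ^ 2 * (1 + cos r ^ 2) / (l ^ 2 - (l ^ 2 - 1) * cos r ^ 2) ^ 2 := by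
  have hcos : cos r ≠ 0 := (cos_pos_of_mem_Ioo ⟨by linarith [hr.1, pi_pos], hr.2⟩).ne'
  have hsin : sin r ≠ 0 := (sin_pos_of_pos_of_lt_pi hr.1 (by linarith [hr.2, pi_pos])).ne'
  have hD : l ^ 2 - (l ^ 2 - 1) * cos r ^ 2 = cos r ^ 2 + l ^ 2 * sin r ^ 2 := by
    linear_combination -l ^ 2 * sin_sq_add_cos_sq r
  have hD_pos := cos_sq_add_mul_sin_sq_pos l hcos
  rw [(hasDerivAt_two_mul_arctan_mul_tan l hcos).deriv, sin_two_mul_arctan_mul_tan l hcos, hD]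
  field_simp

/-- Formula (3.4): the energy density of the comparison map with profile
`f(r) = 2 arctan(λ tan r)` equals `2λ²(1 + cos² r) / (λ² − (λ² − 1)cos² r)²`. -/
theorem energy_density_formula (l : ℝ) (hl : 0 < l) (r : ℝ)
    (hr : r ∈ Set.Ioo (0 : ℝ) (π / 2)) :
    (1 / 2) * ((deriv (fun s => 2 * arctan (l * tan s)) r) ^ 2
        + sin (2 * arctan (l * tan r)) ^ 2 / sin r ^ 2)
      = 2 * l ^ 2 * (1 + cos r ^ 2) / (l ^ 2 - (l ^ 2 - 1) * cos r ^ 2) ^ 2 :=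
  energy_density_formula_general l r hr
end

section
/- Let λ > 1 and define e(r) = 2λ²(1 + cos(r)²) / (λ² − (λ² − 1)cos(r)²)² for r ∈ [0, π/2]. Then ∫₀^{π/2} e(r) sin(r) dr < 2λ²/(λ² − 1). -/
open Real

/-!
With `D(r) = A − B cos² r`, the function `G(r) = −cos r / D(r)` has derivative
`sin r (A + B cos² r) / D(r)²`, and the splitting
`2A(1 + c²) = (1 + A/B)(A + Bc²) − (A/B − 1)(A − Bc²)` shows that the integrand is at most
`(1 + A/B) G'(r)` on `[0, π/2]` when `0 < B < A`.
Hence the integral is at most `(1 + A/B)(G(π/2) − G(0)) = (A + B)/(B (A − B))`, which for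
`A = λ²`, `B = λ² − 1` is `(2λ² − 1)/(λ² − 1) < 2λ²/(λ² − 1)`.
-/

section

variable {A B : ℝ}

lemma sub_mul_cos_sq_pos (hB : 0 ≤ B) (hBA : B < A) (r : ℝ) : 0 < A - B * cos r ^ 2 := by
  nlinarith [cos_sq_le_one r]

lemma hasDerivAt_neg_cos_div_sub_mul_cos_sq {r : ℝ} (hD : A - B * cos r ^ 2 ≠ 0) :
    HasDerivAt (fun x => -cos x / (A - B * cos x ^ 2))
      (sin r * (A + B * cos r ^ 2) / (A - B * cos r ^ 2) ^ 2) r := by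
  have hcos_sq : HasDerivAt (fun x => cos x ^ 2) (2 * cos r * -sin r) r := by
    simpa [mul_comm] using (hasDerivAt_cos r).fun_pow 2
  refine ((hasDerivAt_cos r).fun_neg.div ((hcos_sq.const_mul B).const_sub A) hD).congr_deriv ?_
  ring

lemma two_mul_one_add_sq_div_le (hB : 0 < B) (hBA : B ≤ A) {c : ℝ} (hD : 0 ≤ A - B * c ^ 2) :
    2 * A * (1 + c ^ 2) / (A - B * c ^ 2) ^ 2
      ≤ (1 + A / B) * ((A + B * c ^ 2) / (A - B * c ^ 2) ^ 2) := by
  rw [mul_div_assoc']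
  refine div_le_div_of_nonneg_right ?_ (sq_nonneg _)
  have hsplit : (1 + A / B) * (A + B * c ^ 2) - 2 * A * (1 + c ^ 2)
      = (A / B - 1) * (A - B * c ^ 2) := by
    field_simp
    ring
  have hcoeff : 0 ≤ A / B - 1 := by rw [sub_nonneg, one_le_div hB]; exact hBA
  linarith [mul_nonneg hcoeff hD]

lemma two_mul_one_add_cos_sq_div_sq_mul_sin_le (hB : 0 < B) (hBA : B < A) {r : ℝ}
    (hr : r ∈ Set.Icc 0 π) :
    (2 * A * (1 + cos r ^ 2) / (A - B * cos r ^ 2) ^ 2) * sin r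
      ≤ (1 + A / B) * (sin r * (A + B * cos r ^ 2) / (A - B * cos r ^ 2) ^ 2) := by
  calc (2 * A * (1 + cos r ^ 2) / (A - B * cos r ^ 2) ^ 2) * sin r
      ≤ (1 + A / B) * ((A + B * cos r ^ 2) / (A - B * cos r ^ 2) ^ 2) * sin r :=
        mul_le_mul_of_nonneg_right
          (two_mul_one_add_sq_div_le hB hBA.le (sub_mul_cos_sq_pos hB.le hBA r).le)
          (sin_nonneg_of_nonneg_of_le_pi hr.1 hr.2)
    _ = _ := by ring

lemma integral_two_mul_one_add_cos_sq_div_sq_mul_sin_le (hB : 0 < B) (hBA : B < A) :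
    (∫ r in (0 : ℝ)..(π / 2), (2 * A * (1 + cos r ^ 2) / (A - B * cos r ^ 2) ^ 2) * sin r)
      ≤ (A + B) / (B * (A - B)) := by
  have hD := sub_mul_cos_sq_pos hB.le hBA
  have hD_sq r : (A - B * cos r ^ 2) ^ 2 ≠ 0 := pow_ne_zero 2 (hD r).ne'
  have hf : Continuous fun r => (2 * A * (1 + cos r ^ 2) / (A - B * cos r ^ 2) ^ 2) * sin r :=
    ((by fun_prop : Continuous fun r => 2 * A * (1 + cos r ^ 2)).div (by fun_prop) hD_sq).mul
      continuous_sin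
  have hG' : Continuous fun r => sin r * (A + B * cos r ^ 2) / (A - B * cos r ^ 2) ^ 2 :=
    (by fun_prop : Continuous fun r => sin r * (A + B * cos r ^ 2)).div (by fun_prop) hD_sq
  have hG_pi_div_two : -cos (π / 2) / (A - B * cos (π / 2) ^ 2) = 0 := by simp
  have hG_zero : -cos 0 / (A - B * cos 0 ^ 2) = -1 / (A - B) := by simp
  calc _ ≤ ∫ r in (0 : ℝ)..(π / 2),
          (1 + A / B) * (sin r * (A + B * cos r ^ 2) / (A - B * cos r ^ 2) ^ 2) :=
        intervalIntegral.integral_mono_on (by positivity) (hf.intervalIntegrable _ _)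
          ((hG'.const_mul _).intervalIntegrable _ _) fun r hr =>
            two_mul_one_add_cos_sq_div_sq_mul_sin_le hB hBA
              ⟨hr.1, hr.2.trans (by linarith [pi_pos])⟩
    _ = (1 + A / B) * (0 - -1 / (A - B)) := by
        rw [intervalIntegral.integral_const_mul,
          intervalIntegral.integral_eq_sub_of_hasDerivAt
            (fun r _ => hasDerivAt_neg_cos_div_sub_mul_cos_sq (hD r).ne')
            (hG'.intervalIntegrable _ _), hG_pi_div_two, hG_zero]
    _ = (A + B) / (B * (A - B)) := by
        field_simp [(sub_pos.2 hBA).ne']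
        ring

end

/-- Estimate (3.12): for `λ > 1` the energy density
`e(r) = 2λ²(1 + cos² r)/(λ² − (λ² − 1)cos² r)²` satisfies
`∫₀^{π/2} e(r) sin r dr < 2λ²/(λ² − 1)`. -/
theorem first_order_energy_estimate (l : ℝ) (hl : 1 < l) :
    (∫ r in (0 : ℝ)..(π / 2),
        (2 * l ^ 2 * (1 + cos r ^ 2) / (l ^ 2 - (l ^ 2 - 1) * cos r ^ 2) ^ 2) * sin r)
      < 2 * l ^ 2 / (l ^ 2 - 1) := by
  have hB : (0 : ℝ) < l ^ 2 - 1 := by nlinarith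
  calc _ ≤ (l ^ 2 + (l ^ 2 - 1)) / ((l ^ 2 - 1) * (l ^ 2 - (l ^ 2 - 1))) :=
        integral_two_mul_one_add_cos_sq_div_sq_mul_sin_le hB (by linarith)
    _ = (2 * l ^ 2 - 1) / (l ^ 2 - 1) := by ring_nf
    _ < 2 * l ^ 2 / (l ^ 2 - 1) := by gcongr; linarith
end
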